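/- arXiv:1612.01435 — 4 statements merged into one kernel-verified Lean document; each statement's English description precedes it below -/
import Mathlib

section
/- The shift graph has no finite Borel coloring: for every n∈ω and every Borel map c:[ω]^ω→{0,…,n-1}, there exists X∈[ω]^ω with c(X)=c(S(X)). -/
/-- The space `[ω]^ω` of infinite subsets of `ω`, identified with their strictly
increasing enumerations, as a subspace of the Baire space `ℕ → ℕ`. -/
abbrev InfSub := {g : ℕ → ℕ // StrictMono g}

/-- The shift `S(X) = X ∖ {min X}`. -/
def shiftS (X : InfSub) : InfSub :=
  ⟨fun n => X.1 (n + 1), fun _ _ h => X.2 (Nat.succ_lt_succ h)⟩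

/-- Edge relation of the directed shift graph `D_S`. -/
def shiftEdge (X Y : InfSub) : Prop := X ≠ Y ∧ shiftS X = Y

/-- Edge relation of the symmetric shift graph `G_S`. -/
def shiftAdj (X Y : InfSub) : Prop := X ≠ Y ∧ (shiftS X = Y ∨ shiftS Y = X)

/-- `Unf(P)`: the set of `X` whose consecutive elements are `P`-related. -/
def UnfRel (P : ℕ → ℕ → Prop) : Set InfSub :=
  {X | ∀ i, P (X.1 i) (X.1 (i + 1))}

/-!
By the Galvin–Prikry theorem some infinite `V` has all its infinite subsets of one colour; `V`
and `S(V)` are two of them. Galvin–Prikry follows from Ellentuck's theorem: sets with the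
Baire property in the Ellentuck topology (generated by the neighbourhoods `Cube k W`) form a
σ-algebra containing the open sets, and they are completely Ramsey. The two combinatorial inputs
are Galvin's lemma that Ellentuck open sets are completely Ramsey, and that Ramsey null sets are
closed under countable unions; both are proved by fusion over the finite stems of a condition.
-/

open Set Filter
open scoped symmDiff

namespace Ellentuck

/-- The Ellentuck neighbourhood `[W ∩ {W 0, …, W (k-1)}, W]`. -/
def Cube (k : ℕ) (W : InfSub) : Set InfSub :=
  {X | (∀ i < k, X.1 i = W.1 i) ∧ ∀ i, X.1 i ∈ range W.1}

section Cube

variable {j k : ℕ} {W V X : InfSub}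

lemma self_mem_cube (k : ℕ) (W : InfSub) : W ∈ Cube k W :=
  ⟨fun _ _ => rfl, fun i => ⟨i, rfl⟩⟩

lemma cube_antitone (h : j ≤ k) (W : InfSub) : Cube k W ⊆ Cube j W :=
  fun _ hX => ⟨fun i hi => hX.1 i (hi.trans_le h), hX.2⟩

lemma range_subset_of_mem_cube (h : X ∈ Cube k W) : range X.1 ⊆ range W.1 := by
  rintro _ ⟨i, rfl⟩
  exact h.2 i

lemma mem_cube_trans (hX : X ∈ Cube k V) (hV : V ∈ Cube k W) : X ∈ Cube k W :=
  ⟨fun i hi => (hX.1 i hi).trans (hV.1 i hi), fun i => range_subset_of_mem_cube hV (hX.2 i)⟩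

lemma cube_subset_cube (hV : V ∈ Cube k W) : Cube k V ⊆ Cube k W :=
  fun _ hX => mem_cube_trans hX hV

lemma shiftS_mem_cube (X : InfSub) : shiftS X ∈ Cube 0 X :=
  ⟨fun _ hi => absurd hi (Nat.not_lt_zero _), fun i => ⟨i + 1, rfl⟩⟩

lemma exists_reindex_of_mem_cube (h : X ∈ Cube k W) :
    ∃ g : ℕ → ℕ, StrictMono g ∧ (∀ i, W.1 (g i) = X.1 i) ∧ ∀ i < k, g i = i := by
  choose g hg using h.2
  refine ⟨g, fun a b hab => W.2.lt_iff_lt.1 ?_, hg, fun i hi => W.2.injective ?_⟩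
  · rw [hg, hg]; exact X.2 hab
  · rw [hg, h.1 i hi]

lemma exists_ge_of_mem_cube (h : X ∈ Cube k W) {i : ℕ} (hi : k ≤ i) :
    ∃ r, k ≤ r ∧ W.1 r = X.1 i := by
  obtain ⟨g, hg, hgX, -⟩ := exists_reindex_of_mem_cube h
  exact ⟨g i, hi.trans hg.le_apply, hgX i⟩

end Cube

def concat (B : ℕ) (Y : InfSub) (f : ℕ → ℕ) (hf : StrictMono f) (hYf : ∀ i < B, Y.1 i < f 0) :
    InfSub :=
  ⟨fun i => if i < B then Y.1 i else f (i - B), by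
    refine strictMono_nat_of_lt_succ fun i => ?_
    rcases lt_trichotomy (i + 1) B with h | h | h
    · simp only [if_pos h, if_pos (show i < B by omega)]
      exact Y.2 i.lt_succ_self
    · simp only [if_neg (show ¬ i + 1 < B by omega), if_pos (show i < B by omega),
        show i + 1 - B = 0 by omega]
      exact hYf i (by omega)
    · simp only [if_neg (show ¬ i + 1 < B by omega), if_neg (show ¬ i < B by omega)]
      exact hf (by omega)⟩

section Concat

variable {B : ℕ} {Y : InfSub} {f : ℕ → ℕ} {hf : StrictMono f} {hYf : ∀ i < B, Y.1 i < f 0}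

lemma concat_apply_of_lt {i : ℕ} (hi : i < B) : (concat B Y f hf hYf).1 i = Y.1 i :=
  if_pos hi

lemma concat_apply_of_le {i : ℕ} (hi : B ≤ i) : (concat B Y f hf hYf).1 i = f (i - B) :=
  if_neg (not_lt.2 hi)

lemma concat_mem_cube (h : ∀ i, f i ∈ range Y.1) : concat B Y f hf hYf ∈ Cube B Y := by
  refine ⟨fun i hi => concat_apply_of_lt hi, fun i => ?_⟩
  rcases lt_or_ge i B with hi | hi
  · exact ⟨i, (concat_apply_of_lt hi).symm⟩
  · rw [concat_apply_of_le hi]; exact h _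

end Concat

/-! A stem `s.Sublist (List.range B)` is a set of indices below `B`; `withStem Y s B` is the
subsequence of `Y` at the indices in `s` and at all indices `≥ B`. -/

lemma lt_of_mem_stem {s : List ℕ} {B x : ℕ} (hs : s.Sublist (List.range B)) (hx : x ∈ s) : x < B :=
  List.mem_range.1 (hs.subset hx)

def stemIndex (s : List ℕ) (B i : ℕ) : ℕ :=
  if h : i < s.length then s[i] else i - s.length + B

lemma stemIndex_strictMono {s : List ℕ} {B : ℕ} (hs : s.Sublist (List.range B)) :
    StrictMono (stemIndex s B) := by
  refine strictMono_nat_of_lt_succ fun i => ?_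
  unfold stemIndex
  rcases lt_trichotomy (i + 1) s.length with h | h | h
  · rw [dif_pos (show i < s.length by omega), dif_pos h]
    exact List.pairwise_iff_getElem.1 (List.pairwise_lt_range.sublist hs) i (i + 1) _ h
      i.lt_succ_self
  · rw [dif_pos (show i < s.length by omega), dif_neg (by omega)]
    have := lt_of_mem_stem hs (List.getElem_mem (l := s) (show i < s.length by omega))
    omega
  · rw [dif_neg (by omega), dif_neg (by omega)]
    omega

def withStem (Y : InfSub) (s : List ℕ) (B : ℕ) (hs : s.Sublist (List.range B)) : InfSub :=
  ⟨Y.1 ∘ stemIndex s B, Y.2.comp (stemIndex_strictMono hs)⟩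

section WithStem

variable {Y Y' X Z : InfSub} {s : List ℕ} {B : ℕ} {hs : s.Sublist (List.range B)}

lemma withStem_apply_of_lt {i : ℕ} (hi : i < s.length) : (withStem Y s B hs).1 i = Y.1 s[i] :=
  congrArg Y.1 (dif_pos hi)

lemma withStem_apply_of_le {i : ℕ} (hi : s.length ≤ i) :
    (withStem Y s B hs).1 i = Y.1 (i - s.length + B) :=
  congrArg Y.1 (dif_neg (not_lt.2 hi))

lemma mem_cube_withStem_iff :
    X ∈ Cube s.length (withStem Y s B hs) ↔
      (∀ i (hi : i < s.length), X.1 i = Y.1 s[i]) ∧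
        ∀ i, s.length ≤ i → ∃ r, B ≤ r ∧ Y.1 r = X.1 i := by
  constructor
  · intro hX
    refine ⟨fun i hi => (hX.1 i hi).trans (withStem_apply_of_lt hi), fun i hi => ?_⟩
    obtain ⟨r, hr, hrX⟩ := exists_ge_of_mem_cube hX hi
    exact ⟨r - s.length + B, by omega, (withStem_apply_of_le hr).symm.trans hrX⟩
  · rintro ⟨hstem, htail⟩
    refine ⟨fun i hi => (hstem i hi).trans (withStem_apply_of_lt hi).symm, fun i => ?_⟩
    rcases lt_or_ge i s.length with hi | hi
    · exact ⟨i, (withStem_apply_of_lt hi).trans (hstem i hi).symm⟩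
    · obtain ⟨r, hr, hrX⟩ := htail i hi
      refine ⟨r - B + s.length, ?_⟩
      rw [withStem_apply_of_le (by omega), show r - B + s.length - s.length + B = r by omega, hrX]

lemma withStem_mem_cube {B' : ℕ} (hs' : s.Sublist (List.range B')) (hB : B ≤ B')
    (hY : Y' ∈ Cube B Y) :
    withStem Y' s B' hs' ∈ Cube s.length (withStem Y s B hs) := by
  refine mem_cube_withStem_iff.2 ⟨fun i hi => ?_, fun i hi => ?_⟩
  · rw [withStem_apply_of_lt hi]
    exact hY.1 _ (lt_of_mem_stem hs (List.getElem_mem hi))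
  · rw [withStem_apply_of_le hi]
    exact exists_ge_of_mem_cube hY (by omega)

lemma cube_withStem_subset (hY : Y' ∈ Cube B Y) :
    Cube s.length (withStem Y' s B hs) ⊆ Cube s.length (withStem Y s B hs) :=
  cube_subset_cube (withStem_mem_cube hs le_rfl hY)

lemma exists_withStem_eq (hZ : Z ∈ Cube s.length (withStem Y s B hs)) :
    ∃ Y' ∈ Cube B Y, withStem Y' s B hs = Z := by
  obtain ⟨hstem, htail⟩ := mem_cube_withStem_iff.1 hZ
  have hYZ : ∀ i < B, Y.1 i < Z.1 s.length := fun i hi => by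
    obtain ⟨r, hr, hrZ⟩ := htail _ le_rfl
    exact hrZ ▸ Y.2 (hi.trans_le hr)
  refine ⟨concat B Y (fun i => Z.1 (i + s.length)) (Z.2.comp fun a b h => by simpa using h)
    (by simpa using hYZ), concat_mem_cube fun i => ?_, Subtype.ext (funext fun i => ?_)⟩
  · obtain ⟨r, -, hrZ⟩ := htail _ (Nat.le_add_left _ i)
    exact ⟨r, hrZ⟩
  · rcases lt_or_ge i s.length with hi | hi
    · rw [withStem_apply_of_lt hi, concat_apply_of_lt (lt_of_mem_stem hs (List.getElem_mem hi)),
        hstem i hi]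
    · rw [withStem_apply_of_le hi, concat_apply_of_le (by omega)]
      simp only [show i - s.length + B - B + s.length = i by omega]

lemma withStem_append_singleton (hs' : (s ++ [B]).Sublist (List.range (B + 1))) :
    withStem Y (s ++ [B]) (B + 1) hs' = withStem Y s B hs := by
  refine Subtype.ext (funext fun i => ?_)
  rcases lt_trichotomy i s.length with hi | rfl | hi
  · rw [withStem_apply_of_lt (by simp only [List.length_append, List.length_singleton]; omega), withStem_apply_of_lt hi, List.getElem_append_left hi]
  · rw [withStem_apply_of_lt (by simp), withStem_apply_of_le le_rfl]
    simp
  · rw [withStem_apply_of_le (by simp only [List.length_append, List.length_singleton]; omega), withStem_apply_of_le hi.le]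
    simp only [List.length_append, List.length_singleton]
    rw [show i - (s.length + 1) + (B + 1) = i - s.length + B by omega]

lemma withStem_range (Y : InfSub) (k : ℕ) (h : (List.range k).Sublist (List.range k)) :
    withStem Y (List.range k) k h = Y := by
  refine Subtype.ext (funext fun i => ?_)
  rcases lt_or_ge i k with hi | hi
  · rw [withStem_apply_of_lt (by simpa using hi)]; simp
  · rw [withStem_apply_of_le (by simpa using hi)]
    simp only [List.length_range, Nat.sub_add_cancel hi]

end WithStem

def stems (k m : ℕ) : List (List ℕ) :=
  (List.range (k + m)).sublists.filter fun s => s.take k = List.range k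

section Stems

variable {k m : ℕ} {s : List ℕ}

lemma mem_stems : s ∈ stems k m ↔ s.Sublist (List.range (k + m)) ∧ s.take k = List.range k := by
  simp [stems]

lemma sublist_of_mem_stems (hs : s ∈ stems k m) : s.Sublist (List.range (k + m)) :=
  (mem_stems.1 hs).1

lemma mem_stems_zero : s ∈ stems k 0 ↔ s = List.range k := by
  refine mem_stems.trans ⟨fun ⟨hsub, htake⟩ => ?_, fun h => ⟨h ▸ List.Sublist.refl _, by simp [h]⟩⟩
  rwa [List.take_of_length_le (by simpa using hsub.length_le)] at htake

lemma take_append_singleton_eq_range {t : List ℕ} :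
    (t ++ [k + m]).take k = List.range k ↔ t.take k = List.range k := by
  rcases le_or_gt k t.length with h | h
  · rw [List.take_append_of_le_length h]
  · refine ⟨fun heq => ?_, fun heq => ?_⟩
    · rw [List.take_of_length_le (by simp only [List.length_append, List.length_singleton]; omega)] at heq
      have := heq ▸ List.mem_append_right t (List.mem_singleton_self (k + m))
      simp at this
    · have := congrArg List.length heq
      simp only [List.length_take, List.length_range] at this
      omega

lemma mem_stems_succ :
    s ∈ stems k (m + 1) ↔ s ∈ stems k m ∨ ∃ t ∈ stems k m, s = t ++ [k + m] := by
  simp only [stems, ← add_assoc, List.range_succ, List.sublists_concat, List.filter_append,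
    List.mem_append, List.filter_map, List.mem_map, List.mem_filter, Function.comp_apply,
    decide_eq_true_eq, take_append_singleton_eq_range, eq_comm (a := s)]

end Stems

lemma exists_mem_cube_forall_mem_list {β : Type*} {B : ℕ} {P Q : β → InfSub → Prop}
    (L : List β) (hP : ∀ b Y Y', Y' ∈ Cube B Y → P b Y → P b Y')
    (hQ : ∀ b Y Y', Y' ∈ Cube B Y → Q b Y → Q b Y')
    (h : ∀ b ∈ L, ∀ Y, Q b Y → ∃ Y' ∈ Cube B Y, P b Y') (Y : InfSub) (hY : ∀ b ∈ L, Q b Y) :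
    ∃ Y' ∈ Cube B Y, ∀ b ∈ L, P b Y' := by
  induction L generalizing Y with
  | nil => exact ⟨Y, self_mem_cube B Y, by simp⟩
  | cons b L ih =>
    obtain ⟨Y₁, hY₁, hb⟩ := h b List.mem_cons_self Y (hY b List.mem_cons_self)
    obtain ⟨Y', hY', hL⟩ := ih (fun b' hb' => h b' (List.mem_cons_of_mem _ hb')) Y₁
      fun b' hb' => hQ b' Y Y₁ hY₁ (hY b' (List.mem_cons_of_mem _ hb'))
    refine ⟨Y', mem_cube_trans hY' hY₁, fun b' hb' => ?_⟩
    rcases List.mem_cons.1 hb' with rfl | hb'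
    · exact hP b' Y₁ Y' hY' hb
    · exact hL b' hb'

lemma mem_cube_of_le {R : ℕ → InfSub} {j m : ℕ} (h : ∀ i, m ≤ i → R (i + 1) ∈ Cube j (R i)) :
    ∀ l, m ≤ l → R l ∈ Cube j (R m) :=
  Nat.le_induction (self_mem_cube j (R m)) fun l hl ih => mem_cube_trans (h l hl) ih

lemma exists_mem_cube_of_fusion {k : ℕ} {Y : ℕ → InfSub}
    (h : ∀ m, Y (m + 1) ∈ Cube (k + m) (Y m)) : ∃ V : InfSub, ∀ m, V ∈ Cube (k + m) (Y m) := by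
  have hchain : ∀ m l, m ≤ l → Y l ∈ Cube (k + m) (Y m) := fun m =>
    mem_cube_of_le fun i hi => cube_antitone (by omega) _ (h i)
  have hagree : ∀ i l, i + 1 ≤ l → (Y l).1 i = (Y (i + 1)).1 i :=
    fun i l hl => (hchain _ l hl).1 i (by omega)
  refine ⟨⟨fun i => (Y (i + 1)).1 i, strictMono_nat_of_lt_succ fun i => ?_⟩,
    fun m => ⟨fun i hi => ?_, fun i => ?_⟩⟩
  · rw [← hagree i (i + 2) (by omega)]
    exact (Y (i + 2)).2 i.lt_succ_self
  all_goals rw [← hagree i (max (i + 1) m) (le_max_left ..)]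
  · exact (hchain m _ (le_max_right ..)).1 i hi
  · exact (hchain m _ (le_max_right ..)).2 i

lemma exists_fusion {k : ℕ} (P : ℕ → InfSub → Prop) {W : InfSub} (h0 : P 0 W)
    (hstep : ∀ m Y, P m Y → ∃ Y' ∈ Cube (k + m) Y, P (m + 1) Y') :
    ∃ V ∈ Cube k W, ∀ m, ∃ Y, P m Y ∧ V ∈ Cube (k + m) Y := by
  choose! next hnext hPnext using hstep
  let Y : ℕ → InfSub := fun m => Nat.rec W next m
  have hP : ∀ m, P m (Y m) := fun m => Nat.rec h0 (fun m ih => hPnext m _ ih) m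
  obtain ⟨V, hV⟩ := exists_mem_cube_of_fusion fun m => hnext m (Y m) (hP m)
  exact ⟨V, hV 0, fun m => ⟨Y m, hP m, hV m⟩⟩

lemma exists_stem_of_mem_cube {k : ℕ} {V X : InfSub} (hX : X ∈ Cube k V) (j : ℕ) :
    ∃ m s, ∃ hs : s ∈ stems k m, j < s.length ∧ j < k + m ∧
      X ∈ Cube s.length (withStem V s (k + m) (sublist_of_mem_stems hs)) := by
  obtain ⟨g, hg, hgX, hgk⟩ := exists_reindex_of_mem_cube hX
  set n := max j k
  have hn : n ≤ g n := hg.le_apply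
  have hB : k + (g n + 1 - k) = g n + 1 := by omega
  have hpair : ((List.range (n + 1)).map g).Pairwise (· < ·) :=
    List.pairwise_lt_range.map g fun _ _ => (hg ·)
  have hs : (List.range (n + 1)).map g ∈ stems k (g n + 1 - k) := by
    refine mem_stems.2 ⟨?_, ?_⟩
    · rw [hB]
      refine List.sublist_of_subperm_of_pairwise (r := (· ≤ ·))
        (List.subperm_of_subset (hpair.imp ne_of_lt) fun x hx => ?_) (hpair.imp le_of_lt)
        (List.pairwise_lt_range.imp le_of_lt)
      obtain ⟨i, hi, rfl⟩ := List.mem_map.1 hx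
      exact List.mem_range.2 (Nat.lt_succ_of_le (hg.monotone (by simpa using hi)))
    · rw [← List.map_take, List.take_range, min_eq_left (by omega),
        List.map_congr_left fun x hx => hgk x (List.mem_range.1 hx), List.map_id']
  refine ⟨_, _, hs, by simp only [List.length_map, List.length_range]; omega, by omega, mem_cube_withStem_iff.2 ⟨fun i hi => ?_, ?_⟩⟩
  · simp [hgX]
  · intro i hi
    simp only [List.length_map, List.length_range] at hi
    exact ⟨g i, by rw [hB]; exact Nat.succ_le_of_lt (hg (by omega)), hgX i⟩

def IsEllentuckOpen (U : Set InfSub) : Prop :=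
  ∀ X ∈ U, ∃ k, Cube k X ⊆ U

def IsRamseyNull (N : Set InfSub) : Prop :=
  ∀ k W, ∃ V ∈ Cube k W, Disjoint (Cube k V) N

def IsCompletelyRamsey (A : Set InfSub) : Prop :=
  ∀ k W, ∃ V ∈ Cube k W, Cube k V ⊆ A ∨ Disjoint (Cube k V) A

namespace IsRamseyNull

variable {N N' : Set InfSub}

lemma mono (h : N' ⊆ N) (hN : IsRamseyNull N) : IsRamseyNull N' := fun k W =>
  let ⟨V, hV, hd⟩ := hN k W
  ⟨V, hV, hd.mono_right h⟩

lemma union (hN : IsRamseyNull N) (hN' : IsRamseyNull N') : IsRamseyNull (N ∪ N') := by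
  intro k W
  obtain ⟨V, hV, hd⟩ := hN k W
  obtain ⟨V', hV', hd'⟩ := hN' k V
  exact ⟨V', mem_cube_trans hV' hV, (hd.mono_left (cube_subset_cube hV')).union_right hd'⟩

lemma empty : IsRamseyNull ∅ :=
  fun k W => ⟨W, self_mem_cube k W, disjoint_empty _⟩

lemma biUnion_lt {N : ℕ → Set InfSub} (hN : ∀ n, IsRamseyNull (N n)) (m : ℕ) :
    IsRamseyNull (⋃ n < m, N n) := by
  induction m with
  | zero => simpa using empty
  | succ m ih => rw [biUnion_lt_succ]; exact ih.union (hN m)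

lemma exists_mem_cube_forall_stem (hN : IsRamseyNull N) {B : ℕ} (L : List (List ℕ))
    (hL : ∀ s ∈ L, s.Sublist (List.range B)) (Y : InfSub) :
    ∃ Y' ∈ Cube B Y, ∀ s (hs : s ∈ L), Disjoint (Cube s.length (withStem Y' s B (hL s hs))) N := by
  have hshrink : ∀ s ∈ L, ∀ Y : InfSub, ∃ Y' ∈ Cube B Y,
      ∀ hs, Disjoint (Cube s.length (withStem Y' s B hs)) N := fun s hs Y => by
    obtain ⟨Z, hZ, hd⟩ := hN s.length (withStem Y s B (hL s hs))
    obtain ⟨Y', hY', rfl⟩ := exists_withStem_eq hZ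
    exact ⟨Y', hY', fun _ => hd⟩
  obtain ⟨Y', hY', hP⟩ := exists_mem_cube_forall_mem_list L (Q := fun _ _ => True)
    (fun _ _ _ hY' hP hs => (hP hs).mono_left (cube_withStem_subset hY'))
    (fun _ _ _ _ _ => trivial) (fun s hs Y _ => hshrink s hs Y) Y fun _ _ => trivial
  exact ⟨Y', hY', fun s hs => hP s hs _⟩

lemma iUnion {N : ℕ → Set InfSub} (hN : ∀ n, IsRamseyNull (N n)) : IsRamseyNull (⋃ n, N n) := by
  intro k W
  obtain ⟨V, hVW, hV⟩ := exists_fusion (k := k) (W := W)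
    (fun m Y => ∀ s (hs : s ∈ stems k m),
      Disjoint (Cube s.length (withStem Y s (k + m) (sublist_of_mem_stems hs))) (⋃ n < m, N n))
    (by simp) fun m Y _ => by
      obtain ⟨Y', hY', hd⟩ := (biUnion_lt hN (m + 1)).exists_mem_cube_forall_stem
        (stems k (m + 1)) (fun _ => sublist_of_mem_stems) Y
      exact ⟨Y', cube_antitone (by omega) Y hY', hd⟩
  refine ⟨V, hVW, disjoint_left.2 fun X hX hXN => ?_⟩
  obtain ⟨n, hXn⟩ := mem_iUnion.1 hXN
  obtain ⟨m, s, hs, -, hnm, hXs⟩ := exists_stem_of_mem_cube hX (k + n)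
  obtain ⟨Y, hY, hVY⟩ := hV m
  exact disjoint_left.1 (hY s hs) (mem_cube_trans hXs (withStem_mem_cube _ le_rfl hVY))
    (mem_iUnion₂.2 ⟨n, by omega, hXn⟩)

end IsRamseyNull

def diagonal (j : ℕ) (R : ℕ → InfSub) (hR : StrictMono fun i => (R i).1 j) : InfSub :=
  concat j (R 0) (fun i => (R i).1 j) hR fun _ hi => (R 0).2 hi

section Diagonal

variable {j : ℕ} {R : ℕ → InfSub} {hR : StrictMono fun i => (R i).1 j} {X : InfSub}

lemma exists_seq_strictMono {p : InfSub → Prop} (h : ∀ S, ∃ S' ∈ Cube (j + 1) S, p S')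
    (S : InfSub) : ∃ R : ℕ → InfSub, (∀ i, p (R i)) ∧ R 0 ∈ Cube j S ∧
      (∀ i, R (i + 1) ∈ Cube j (R i)) ∧ StrictMono fun i => (R i).1 j := by
  choose next hnext hp using h
  -- dropping the `j`-th value before refining again makes the `j`-th values increase
  let drop (S : InfSub) : InfSub :=
    concat j S (fun i => S.1 (i + j + 1)) (S.2.comp fun a b h => by simpa using h)
      fun _ hi => S.2 (by omega)
  let R : ℕ → InfSub := fun i => Nat.rec (next S) (fun _ S' => next (drop S')) i
  have hstep : ∀ i, R (i + 1) ∈ Cube (j + 1) (drop (R i)) := fun i => hnext _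
  refine ⟨R, fun i => i.rec (hp _) fun _ _ => hp _, cube_antitone j.le_succ _ (hnext S),
    fun i => mem_cube_trans (cube_antitone j.le_succ _ (hstep i))
      (concat_mem_cube fun _ => ⟨_, rfl⟩), strictMono_nat_of_lt_succ fun i => ?_⟩
  rw [(hstep i).1 j j.lt_succ_self, concat_apply_of_le le_rfl]
  exact (R i).2 (by omega)

lemma diagonal_mem_cube (hchain : ∀ i l, i ≤ l → R l ∈ Cube j (R i)) :
    diagonal j R hR ∈ Cube j (R 0) :=
  concat_mem_cube fun i => (hchain 0 i i.zero_le).2 j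

lemma exists_mem_cube_succ_of_mem_cube_diagonal (hchain : ∀ i l, i ≤ l → R l ∈ Cube j (R i))
    (hX : X ∈ Cube j (diagonal j R hR)) : ∃ i, X ∈ Cube (j + 1) (R i) := by
  obtain ⟨r, hr, hrX⟩ := exists_ge_of_mem_cube hX le_rfl
  have hagree : ∀ t ≤ j, X.1 t = (R (r - j)).1 t := by
    intro t ht
    rcases ht.lt_or_eq with ht | rfl
    · rw [hX.1 t ht, diagonal, concat_apply_of_lt ht, (hchain 0 (r - j) (Nat.zero_le _)).1 t ht]
    · rw [← hrX, diagonal, concat_apply_of_le hr]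
  refine ⟨r - j, fun t ht => hagree t (Nat.le_of_lt_succ ht), fun t => ?_⟩
  rcases le_or_gt t j with ht | ht
  · exact ⟨t, (hagree t ht).symm⟩
  obtain ⟨u, hu⟩ := hX.2 t
  have hru : r < u := (diagonal j R hR).2.lt_iff_lt.1 (by rw [hu, hrX]; exact X.2 ht)
  rw [← hu, diagonal, concat_apply_of_le (by omega)]
  exact (hchain (r - j) (u - j) (by omega)).2 j

end Diagonal

def Rejects (U : Set InfSub) (j : ℕ) (S : InfSub) : Prop :=
  ∀ Z ∈ Cube j S, ¬ Cube j Z ⊆ U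

section Rejects

variable {U : Set InfSub} {j : ℕ} {S Y Z : InfSub}

lemma Rejects.mono (h : Rejects U j S) (hZ : Z ∈ Cube j S) : Rejects U j Z :=
  fun Z' hZ' => h Z' (mem_cube_trans hZ' hZ)

lemma exists_subset_or_rejects (U : Set InfSub) (j : ℕ) (S : InfSub) :
    ∃ Z ∈ Cube j S, Cube j Z ⊆ U ∨ Rejects U j Z := by
  by_cases h : Rejects U j S
  · exact ⟨S, self_mem_cube j S, Or.inr h⟩
  · simp only [Rejects, not_forall, not_not] at h
    obtain ⟨Z, hZ, hZU⟩ := h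
    exact ⟨Z, hZ, Or.inl hZU⟩

lemma Rejects.exists_forall_rejects_succ (h : Rejects U j S) :
    ∃ S' ∈ Cube j S, ∀ Z ∈ Cube j S', Rejects U (j + 1) Z := by
  obtain ⟨R, hdec, hR0, hsucc, hmono⟩ :=
    exists_seq_strictMono (fun R => exists_subset_or_rejects U (j + 1) R) S
  have hchain : ∀ i l, i ≤ l → R l ∈ Cube j (R i) := fun i => mem_cube_of_le fun l _ => hsucc l
  have hdiag : ∀ φ : ℕ → ℕ, StrictMono φ →
      ∃ D ∈ Cube j S, ∀ X ∈ Cube j D, ∃ i, X ∈ Cube (j + 1) (R (φ i)) := fun φ hφ => by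
    have hchainφ : ∀ i l, i ≤ l → R (φ l) ∈ Cube j (R (φ i)) :=
      fun i l hil => hchain _ _ (hφ.monotone hil)
    exact ⟨diagonal j (R ∘ φ) (hmono.comp hφ),
      mem_cube_trans (diagonal_mem_cube hchainφ) (mem_cube_trans (hchain 0 _ (Nat.zero_le _)) hR0),
      fun X hX => exists_mem_cube_succ_of_mem_cube_diagonal hchainφ hX⟩
  -- Each `R i` decides its one-point extension. If infinitely many accept, the diagonal of
  -- those refines `S` into `U`; otherwise the diagonal of a tail has only rejected extensions.
  by_cases hacc : ∃ᶠ i in atTop, Cube (j + 1) (R i) ⊆ U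
  · obtain ⟨φ, hφ, hφU⟩ := extraction_of_frequently_atTop hacc
    obtain ⟨D, hD, hDR⟩ := hdiag φ hφ
    refine absurd (fun X hX => ?_) (h D hD)
    obtain ⟨i, hi⟩ := hDR X hX
    exact hφU i hi
  · obtain ⟨N, hN⟩ := eventually_atTop.1 (not_frequently.1 hacc)
    obtain ⟨D, hD, hDR⟩ := hdiag (N + ·) (strictMono_id.const_add N)
    refine ⟨D, hD, fun Z hZ => ?_⟩
    obtain ⟨i, hi⟩ := hDR Z hZ
    exact ((hdec _).resolve_left (hN _ (Nat.le_add_right N i))).mono hi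

lemma Rejects.exists_forall_rejects_withStem {s : List ℕ} {B : ℕ} {hs : s.Sublist (List.range B)}
    (h : Rejects U s.length (withStem Y s B hs)) :
    ∃ Y' ∈ Cube B Y, ∀ Y'' ∈ Cube B Y', Rejects U (s.length + 1) (withStem Y'' s B hs) := by
  obtain ⟨S', hS', hrej⟩ := h.exists_forall_rejects_succ
  obtain ⟨Y', hY', rfl⟩ := exists_withStem_eq hS'
  exact ⟨Y', hY', fun Y'' hY'' => hrej _ (withStem_mem_cube hs le_rfl hY'')⟩

end Rejects

section Galvin

variable {U : Set InfSub} {k m : ℕ} {Y : InfSub}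

def StemsReject (U : Set InfSub) (k m : ℕ) (Y : InfSub) : Prop :=
  ∀ s (hs : s ∈ stems k m), Rejects U s.length (withStem Y s (k + m) (sublist_of_mem_stems hs))

lemma StemsReject.exists_succ (h : StemsReject U k m Y) :
    ∃ Y' ∈ Cube (k + m) Y, StemsReject U k (m + 1) Y' := by
  -- `P` quantifies over all refinements `Y''` so that it survives the later shrinking steps,
  -- which may change the value at position `k + m`.
  obtain ⟨Y', hY', hext⟩ := exists_mem_cube_forall_mem_list (stems k m)
    (P := fun s Y => ∀ hs, ∀ Y'' ∈ Cube (k + m) Y,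
      Rejects U (s.length + 1) (withStem Y'' s (k + m) hs))
    (Q := fun s Y => ∀ hs, Rejects U s.length (withStem Y s (k + m) hs))
    (fun _ _ _ hY' hP hs Y'' hY'' => hP hs Y'' (mem_cube_trans hY'' hY'))
    (fun _ _ _ hY' hQ hs => (hQ hs).mono (withStem_mem_cube hs le_rfl hY'))
    (fun s hs Y hQ =>
      let ⟨Y', hY', hrej⟩ := (hQ (sublist_of_mem_stems hs)).exists_forall_rejects_withStem
      ⟨Y', hY', fun _ => hrej⟩)
    Y fun s hs _ => h s hs
  refine ⟨Y', hY', fun s hs => ?_⟩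
  rcases mem_stems_succ.1 hs with hs | ⟨t, ht, rfl⟩
  · exact (h s hs).mono (withStem_mem_cube _ (Nat.le_succ _) hY')
  · show Rejects U _ (withStem Y' (t ++ [k + m]) (k + m + 1) _)
    rw [withStem_append_singleton (hs := sublist_of_mem_stems ht), List.length_append,
      List.length_singleton]
    exact hext t ht _ Y' (self_mem_cube _ _)

theorem IsEllentuckOpen.isCompletelyRamsey (hU : IsEllentuckOpen U) : IsCompletelyRamsey U := by
  intro k W
  obtain ⟨Z, hZW, hZ | hZ⟩ := exists_subset_or_rejects U k W
  · exact ⟨Z, hZW, Or.inl hZ⟩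
  have h0 : StemsReject U k 0 Z := fun s hs => by
    obtain rfl := mem_stems_zero.1 hs
    simpa [withStem_range] using hZ
  obtain ⟨V, hVZ, hV⟩ := exists_fusion _ h0 fun _ _ hY => hY.exists_succ
  refine ⟨V, mem_cube_trans hVZ hZW, Or.inr (disjoint_left.2 fun X hX hXU => ?_)⟩
  obtain ⟨j, hj⟩ := hU X hXU
  obtain ⟨m, s, hs, hjs, -, hXs⟩ := exists_stem_of_mem_cube hX j
  obtain ⟨Y, hY, hVY⟩ := hV m
  exact hY s hs X (mem_cube_trans hXs (withStem_mem_cube _ le_rfl hVY))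
    ((cube_antitone hjs.le X).trans hj)

end Galvin

section BaireProperty

variable {U V A : Set InfSub}

lemma IsEllentuckOpen.union (hU : IsEllentuckOpen U) (hV : IsEllentuckOpen V) :
    IsEllentuckOpen (U ∪ V) := by
  rintro X (hX | hX)
  · obtain ⟨k, hk⟩ := hU X hX
    exact ⟨k, hk.trans subset_union_left⟩
  · obtain ⟨k, hk⟩ := hV X hX
    exact ⟨k, hk.trans subset_union_right⟩

lemma IsEllentuckOpen.iUnion {U : ℕ → Set InfSub} (hU : ∀ n, IsEllentuckOpen (U n)) :
    IsEllentuckOpen (⋃ n, U n) := by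
  intro X hX
  obtain ⟨n, hXn⟩ := mem_iUnion.1 hX
  obtain ⟨k, hk⟩ := hU n X hXn
  exact ⟨k, hk.trans (subset_iUnion U n)⟩

lemma isEllentuckOpen_of_isOpen (hU : IsOpen U) : IsEllentuckOpen U := by
  obtain ⟨O, hO, rfl⟩ := isOpen_induced_iff.1 hU
  intro X hX
  obtain ⟨I, u, hIu, hsub⟩ := isOpen_pi_iff.1 hO X.1 hX
  refine ⟨I.sup id + 1, fun Z hZ => hsub fun i hi => ?_⟩
  rw [hZ.1 i (Nat.lt_succ_of_le (Finset.le_sup (f := id) hi))]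
  exact (hIu i hi).2

def ellentuckExterior (U : Set InfSub) : Set InfSub :=
  {X | ∃ k, Disjoint (Cube k X) U}

lemma isEllentuckOpen_ellentuckExterior (U : Set InfSub) :
    IsEllentuckOpen (ellentuckExterior U) := by
  rintro X ⟨k, hk⟩
  exact ⟨k, fun Y hY => ⟨k, hk.mono_left (cube_subset_cube hY)⟩⟩

lemma disjoint_ellentuckExterior (U : Set InfSub) : Disjoint (ellentuckExterior U) U :=
  disjoint_left.2 fun X ⟨k, hk⟩ => disjoint_left.1 hk (self_mem_cube k X)

lemma IsEllentuckOpen.isRamseyNull_compl_union_ellentuckExterior (hU : IsEllentuckOpen U) :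
    IsRamseyNull (U ∪ ellentuckExterior U)ᶜ := by
  intro k W
  obtain ⟨V, hV, hsub | hdisj⟩ :=
    (hU.union (isEllentuckOpen_ellentuckExterior U)).isCompletelyRamsey k W
  · exact ⟨V, hV, disjoint_compl_right_iff_subset.2 hsub⟩
  · exact absurd (Or.inr ⟨k, hdisj.mono_right subset_union_left⟩)
      (disjoint_left.1 hdisj (self_mem_cube k V))

/-- The Baire property with respect to the Ellentuck topology, whose meagre sets are exactly the
Ramsey null sets. -/
def HasEllentuckBaireProperty (A : Set InfSub) : Prop :=
  ∃ U, IsEllentuckOpen U ∧ IsRamseyNull (A ∆ U)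

lemma IsEllentuckOpen.hasEllentuckBaireProperty (hU : IsEllentuckOpen U) :
    HasEllentuckBaireProperty U :=
  ⟨U, hU, by simpa using IsRamseyNull.empty⟩

namespace HasEllentuckBaireProperty

lemma compl (h : HasEllentuckBaireProperty A) : HasEllentuckBaireProperty Aᶜ := by
  obtain ⟨U, hU, hN⟩ := h
  refine ⟨ellentuckExterior U, isEllentuckOpen_ellentuckExterior U,
    (hN.union hU.isRamseyNull_compl_union_ellentuckExterior).mono fun X hX => ?_⟩
  have : X ∈ ellentuckExterior U → X ∉ U :=
    fun h => disjoint_left.1 (disjoint_ellentuckExterior U) h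
  simp only [mem_symmDiff, mem_compl_iff, mem_union] at hX ⊢
  tauto

lemma iUnion {A : ℕ → Set InfSub} (h : ∀ n, HasEllentuckBaireProperty (A n)) :
    HasEllentuckBaireProperty (⋃ n, A n) := by
  choose U hU hN using h
  exact ⟨⋃ n, U n, IsEllentuckOpen.iUnion hU,
    (IsRamseyNull.iUnion hN).mono iUnion_symmDiff_iUnion_subset⟩

lemma isCompletelyRamsey (h : HasEllentuckBaireProperty A) : IsCompletelyRamsey A := by
  obtain ⟨U, hU, hN⟩ := h
  intro k W
  obtain ⟨V₁, hV₁, hd⟩ := hN k W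
  obtain ⟨V₂, hV₂, hU₂⟩ := hU.isCompletelyRamsey k V₁
  have hagree : ∀ X ∈ Cube k V₂, X ∈ A ↔ X ∈ U := fun X hX => by
    have := disjoint_left.1 hd (mem_cube_trans hX hV₂)
    simp only [mem_symmDiff] at this
    tauto
  refine ⟨V₂, mem_cube_trans hV₂ hV₁, hU₂.imp (fun hsub X hX => ?_) fun hdisj => ?_⟩
  · exact (hagree X hX).2 (hsub hX)
  · exact disjoint_left.2 fun X hX hXA => disjoint_left.1 hdisj hX ((hagree X hX).1 hXA)

end HasEllentuckBaireProperty

lemma _root_.MeasurableSet.hasEllentuckBaireProperty (hA : MeasurableSet A) :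
    HasEllentuckBaireProperty A := by
  rw [BorelSpace.measurable_eq (α := InfSub)] at hA
  induction A, hA using MeasurableSpace.generateFrom_induction with
  | hC U hU _ => exact (isEllentuckOpen_of_isOpen hU).hasEllentuckBaireProperty
  | empty => exact (isEllentuckOpen_of_isOpen isOpen_empty).hasEllentuckBaireProperty
  | compl A _ h => exact h.compl
  | iUnion A _ h => exact .iUnion h

end BaireProperty

/-- The Galvin–Prikry theorem. -/
theorem exists_cube_forall_eq {α : Type*} [Finite α] [MeasurableSpace α]
    [MeasurableSingletonClass α] {c : InfSub → α} (hc : Measurable c) (W : InfSub) :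
    ∃ V ∈ Cube 0 W, ∀ X ∈ Cube 0 V, c X = c V := by
  obtain ⟨L, -, hL⟩ := Finite.exists_univ_list α
  obtain ⟨V, hVW, hV⟩ := exists_mem_cube_forall_mem_list L (B := 0) (Q := fun _ _ => True)
    (P := fun a V => Cube 0 V ⊆ c ⁻¹' {a} ∨ Disjoint (Cube 0 V) (c ⁻¹' {a}))
    (fun _ _ _ hV' hP => hP.imp (cube_subset_cube hV').trans (·.mono_left (cube_subset_cube hV')))
    (fun _ _ _ _ _ => trivial)
    (fun a _ Y _ =>
      (hc (measurableSet_singleton a)).hasEllentuckBaireProperty.isCompletelyRamsey 0 Y)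
    W fun _ _ => trivial
  refine ⟨V, hVW, ?_⟩
  rcases hV (c V) (hL _) with hsub | hdisj
  · exact fun X hX => hsub hX
  · exact absurd rfl (disjoint_left.1 hdisj (self_mem_cube 0 V))

end Ellentuck

/-- the shift graph has no finite Borel coloring. -/
theorem shiftGraph_no_finite_borel_coloring :
    ∀ (n : ℕ) (c : InfSub → Fin n), Measurable c → ∃ X : InfSub, c X = c (shiftS X) := by
  intro n c hc
  obtain ⟨V, -, hV⟩ := Ellentuck.exists_cube_forall_eq hc ⟨id, strictMono_id⟩
  exact ⟨V, (hV _ (Ellentuck.shiftS_mem_cube V)).symm⟩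
end

section
/- The Borel chromatic number of the shift graph is exactly ℵ₀: there is a Borel coloring of G_S with countably many colors (e.g., X ↦ min X), but no Borel coloring with finitely many colors. -/
open Set

/-- Ellentuck's basic set `[s, B]`. -/
def ellentuck (s : Finset ℕ) (B : Set ℕ) : Set (Set ℕ) :=
  {X | X.Infinite ∧ ↑s ⊆ X ∧ X ⊆ ↑s ∪ B}

lemma ellentuck_mono {s : Finset ℕ} {B C : Set ℕ} (h : C ⊆ B) : ellentuck s C ⊆ ellentuck s B :=
  fun _ hX => ⟨hX.1, hX.2.1, hX.2.2.trans (union_subset_union_right _ h)⟩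

lemma sdiff_subset_of_mem_ellentuck {s : Finset ℕ} {B X : Set ℕ} (hX : X ∈ ellentuck s B) :
    X \ ↑s ⊆ B :=
  fun _ hx => (hX.2.2 hx.1).resolve_left hx.2

/- Unlike in Ellentuck's definition, `B` need not lie above `max s`; shrinking `B` to its part
above `max s` shows that the two notions agree. -/
def CompletelyRamsey (A : Set (Set ℕ)) : Prop :=
  ∀ (s : Finset ℕ) (B : Set ℕ), B.Infinite →
    ∃ C ⊆ B, C.Infinite ∧ (ellentuck s C ⊆ A ∨ Disjoint (ellentuck s C) A)

lemma exists_subset_forall_mem_finset {ι : Type*} {D : Set ℕ → ι → Prop}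
    (mono : ∀ {B C i}, C ⊆ B → D B i → D C i)
    (dense : ∀ B, B.Infinite → ∀ i, ∃ C ⊆ B, C.Infinite ∧ D C i)
    (T : Finset ι) {B : Set ℕ} (hB : B.Infinite) :
    ∃ C ⊆ B, C.Infinite ∧ ∀ i ∈ T, D C i := by
  classical
  induction T using Finset.induction_on generalizing B with
  | empty => exact ⟨B, subset_rfl, hB, by simp⟩
  | insert a T _ ih =>
    obtain ⟨C, hCB, hC, hCa⟩ := dense B hB a
    obtain ⟨C', hC'C, hC', hC'T⟩ := ih hC
    refine ⟨C', hC'C.trans hCB, hC', ?_⟩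
    simpa only [Finset.forall_mem_insert] using ⟨mono hC'C hCa, hC'T⟩

theorem exists_fusion_sequence {Q : Finset ℕ → Set ℕ → Prop}
    (dense : ∀ p B, B.Infinite → ∃ C ⊆ B, C.Infinite ∧ Q p C) {B : Set ℕ} (hB : B.Infinite) :
    ∃ (c : ℕ → ℕ) (Bs : ℕ → Set ℕ), StrictMono c ∧ Antitone Bs ∧ range c ⊆ B ∧
      (∀ k, c k ∈ Bs k) ∧ ∀ k, Q ((Finset.range k).image c) (Bs k) := by
  have step : ∀ q : Finset ℕ × {B : Set ℕ // B.Infinite}, ∃ x ∈ q.2.1,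
      ∃ C : {B : Set ℕ // B.Infinite}, C.1 ⊆ q.2.1 \ Iic x ∧ Q (insert x q.1) C.1 := by
    rintro ⟨p, B, hB⟩
    obtain ⟨x, hx⟩ := hB.nonempty
    obtain ⟨C, hCB, hC, hQ⟩ := dense (insert x p) (B \ Iic x) (hB.sdiff (finite_Iic x))
    exact ⟨x, hx, ⟨C, hC⟩, hCB, hQ⟩
  choose x hx next hnext hQ using step
  obtain ⟨B₀, hB₀, hB₀inf, hQ₀⟩ := dense ∅ B hB
  let q : ℕ → Finset ℕ × {B : Set ℕ // B.Infinite} := fun k =>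
    Nat.rec (∅, ⟨B₀, hB₀inf⟩) (fun _ q => (insert (x q) q.1, next q)) k
  have hq : ∀ k, (q k).1 = (Finset.range k).image (fun i => x (q i)) := by
    intro k
    induction k with
    | zero => rfl
    | succ k ih => simp only [Finset.range_add_one, Finset.image_insert, ← ih]; rfl
  have hsucc : ∀ k, (q (k + 1)).2.1 ⊆ (q k).2.1 \ Iic (x (q k)) := fun k => hnext (q k)
  have hanti : Antitone fun k => (q k).2.1 :=
    antitone_nat_of_succ_le fun k => (hsucc k).trans sdiff_subset
  refine ⟨fun k => x (q k), fun k => (q k).2.1, strictMono_nat_of_lt_succ fun k => ?_, hanti,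
    ?_, fun k => hx (q k), fun k => hq k ▸ ?_⟩
  · exact not_le.1 (hsucc k (hx (q (k + 1)))).2
  · rintro _ ⟨k, rfl⟩
    exact hB₀ (hanti (Nat.zero_le k) (hx (q k)))
  · cases k with
    | zero => exact hQ₀
    | succ k => exact hQ (q k)

lemma StrictMono.exists_subset_image_range {c : ℕ → ℕ} (hc : StrictMono c) {t : Finset ℕ}
    (ht : ↑t ⊆ range c) :
    ∃ k, t ⊆ (Finset.range k).image c ∧ ∀ i, (∀ y ∈ t, y < c i) → k ≤ i := by
  classical
  induction t using Finset.induction_on_max with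
  | empty => exact ⟨0, by simp, fun _ _ => Nat.zero_le _⟩
  | insert a t hlt ih =>
    rw [Finset.coe_insert, insert_subset_iff] at ht
    obtain ⟨⟨j, rfl⟩, ht⟩ := ht
    obtain ⟨k, htk, hk⟩ := ih ht
    refine ⟨j + 1, Finset.insert_subset ?_ (htk.trans ?_), fun i hi => ?_⟩
    · exact Finset.mem_image_of_mem c (Finset.self_mem_range_succ j)
    · exact Finset.image_subset_image (Finset.range_subset_range.2 ((hk j hlt).trans j.le_succ))
    · exact hc.lt_iff_lt.1 (hi _ (Finset.mem_insert_self _ _))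

theorem exists_infinite_forall_finset {P : Finset ℕ → Prop} {C : Set ℕ} (hC : C.Infinite)
    (h0 : P ∅)
    (hext : ∀ t : Finset ℕ, ↑t ⊆ C → P t →
      {n ∈ C | (∀ y ∈ t, y < n) ∧ ¬ P (insert n t)}.Finite) :
    ∃ D ⊆ C, D.Infinite ∧ ∀ t : Finset ℕ, ↑t ⊆ D → P t := by
  classical
  let Good (B : Set ℕ) (t : Finset ℕ) : Prop :=
    ∀ n ∈ B, n ∈ C → ↑t ⊆ C → P t → (∀ y ∈ t, y < n) → P (insert n t)
  have dense : ∀ B, B.Infinite → ∀ t, ∃ B' ⊆ B, B'.Infinite ∧ Good B' t := by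
    intro B hB t
    by_cases ht : ↑t ⊆ C ∧ P t
    · refine ⟨B \ {n ∈ C | (∀ y ∈ t, y < n) ∧ ¬ P (insert n t)}, sdiff_subset,
        hB.sdiff (hext t ht.1 ht.2), fun n hn hnC _ _ hlt => ?_⟩
      by_contra hP
      exact hn.2 ⟨hnC, hlt, hP⟩
    · exact ⟨B, subset_rfl, hB, fun _ _ _ htC hPt _ => absurd ⟨htC, hPt⟩ ht⟩
  obtain ⟨c, Bs, hc, -, hcC, hcBs, hgood⟩ := exists_fusion_sequence
    (Q := fun p B => ∀ t ∈ p.powerset, Good B t)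
    (fun p B hB => exists_subset_forall_mem_finset
      (fun hCB h n hn => h n (hCB hn)) dense p.powerset hB) hC
  refine ⟨range c, hcC, infinite_range_of_injective hc.injective, fun t ht => ?_⟩
  induction t using Finset.induction_on_max with
  | empty => exact h0
  | insert a t hlt ih =>
    rw [Finset.coe_insert, insert_subset_iff] at ht
    obtain ⟨⟨j, rfl⟩, ht⟩ := ht
    obtain ⟨k, htk, hk⟩ := hc.exists_subset_image_range ht
    have htj : t ∈ ((Finset.range j).image c).powerset :=
      Finset.mem_powerset.2 (htk.trans (Finset.image_subset_image
        (Finset.range_subset_range.2 (hk j hlt))))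
    exact hgood j t htj (c j) (hcBs j) (hcC ⟨j, rfl⟩) (ht.trans hcC) (ih ht) hlt

section Galvin

variable (F : Finset ℕ → Prop)

def IsInitialSegment (t : Finset ℕ) (Y : Set ℕ) : Prop :=
  ↑t ⊆ Y ∧ ∀ x ∈ Y, x ∉ t → ∀ y ∈ t, y < x

def Accepts (B : Set ℕ) (t : Finset ℕ) : Prop :=
  ∀ Y ∈ ellentuck t B, ∃ u, IsInitialSegment u Y ∧ F u

def Rejects (B : Set ℕ) (t : Finset ℕ) : Prop :=
  ∀ C ⊆ B, C.Infinite → ¬ Accepts F C t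

variable {F}

lemma Accepts.mono {B C : Set ℕ} {t : Finset ℕ} (h : Accepts F B t) (hCB : C ⊆ B) :
    Accepts F C t :=
  fun Y hY => h Y (ellentuck_mono hCB hY)

lemma Rejects.mono {B C : Set ℕ} {t : Finset ℕ} (h : Rejects F B t) (hCB : C ⊆ B) :
    Rejects F C t :=
  fun C' hC' => h C' (hC'.trans hCB)

lemma exists_accepts_or_rejects (t : Finset ℕ) {B : Set ℕ} (hB : B.Infinite) :
    ∃ C ⊆ B, C.Infinite ∧ (Accepts F C t ∨ Rejects F C t) := by
  by_cases h : Rejects F B t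
  · exact ⟨B, subset_rfl, hB, Or.inr h⟩
  · simp only [Rejects, not_forall, not_not] at h
    obtain ⟨C, hCB, hC, hacc⟩ := h
    exact ⟨C, hCB, hC, Or.inl hacc⟩

/- If infinitely many `n ∈ B` had `B \ Iic n` accepting `insert n t`, then these `n` would form
a subset of `B` accepting `t`: split `Y` at the least element of `Y \ t`. -/
lemma Rejects.finite_accepts_insert {B : Set ℕ} {t : Finset ℕ} (h : Rejects F B t) :
    {n ∈ B | Accepts F (B \ Iic n) (insert n t)}.Finite := by
  by_contra hinf
  refine h _ (fun n hn => hn.1) hinf fun Y ⟨hY, htY, hYt⟩ => ?_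
  have hYt_ne : (Y \ ↑t).Nonempty := (hY.sdiff t.finite_toSet).nonempty
  set n := sInf (Y \ ↑t)
  have hn : n ∈ Y \ ↑t := Nat.sInf_mem hYt_ne
  have hnD := (hYt hn.1).resolve_left hn.2
  refine hnD.2 Y ⟨hY, ?_, fun x hx => ?_⟩
  · simpa only [Finset.coe_insert] using insert_subset hn.1 htY
  · rw [Finset.coe_insert]
    by_cases hxt : x ∈ (↑t : Set ℕ)
    · exact Or.inl (Or.inr hxt)
    rcases eq_or_ne x n with rfl | hxn
    · exact Or.inl (Or.inl rfl)
    · refine Or.inr ⟨((hYt hx).resolve_left hxt).1, fun hxle => hxn (le_antisymm hxle ?_)⟩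
      exact Nat.sInf_le ⟨hx, hxt⟩

/- Diagonalise so that every finite `t ⊆ range c` is decided by its tail in `range c`, then keep
only the rejected `t`: a `t ∈ F` would be accepted by its own tail. -/
lemma Rejects.exists_forall_not {B : Set ℕ} (hB : B.Infinite) (hrej : Rejects F B ∅) :
    ∃ C ⊆ B, C.Infinite ∧ ∀ t : Finset ℕ, ↑t ⊆ C → ¬ F t := by
  obtain ⟨c, Bs, hc, hBs, hcB, hcBs, hdec⟩ := exists_fusion_sequence
    (Q := fun p B => ∀ t ∈ p.powerset, Accepts F B t ∨ Rejects F B t)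
    (fun p B hB => exists_subset_forall_mem_finset
      (fun hCB h => h.imp (·.mono hCB) (·.mono hCB))
      (fun _ hB t => exists_accepts_or_rejects t hB) p.powerset hB) hB
  let tail (t : Finset ℕ) : Set ℕ := {x ∈ range c | ∀ y ∈ t, y < x}
  have htail_inf : ∀ t, (tail t).Infinite := fun t => by
    refine ((infinite_range_of_injective hc.injective).sdiff (finite_Iic (t.sup id))).mono ?_
    exact fun x ⟨hx, hxt⟩ => ⟨hx, fun y hy => (Finset.le_sup (f := id) hy).trans_lt (not_le.1 hxt)⟩
  have htail_insert : ∀ n t, tail (insert n t) = tail t \ Iic n := fun n t => by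
    ext x
    simp only [tail, mem_sdiff, mem_ofPred_eq, mem_Iic, Finset.forall_mem_insert, not_le]
    tauto
  have hdecided : ∀ t : Finset ℕ, ↑t ⊆ range c →
      Accepts F (tail t) t ∨ Rejects F (tail t) t := fun t ht => by
    obtain ⟨k, htk, hk⟩ := hc.exists_subset_image_range ht
    have hsub : tail t ⊆ Bs k := by
      rintro _ ⟨⟨i, rfl⟩, hi⟩
      exact hBs (hk i hi) (hcBs i)
    exact (hdec k t (Finset.mem_powerset.2 htk)).imp (·.mono hsub) (·.mono hsub)
  have hext : ∀ t : Finset ℕ, ↑t ⊆ range c → Rejects F (tail t) t →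
      {n ∈ range c | (∀ y ∈ t, y < n) ∧ ¬ Rejects F (tail (insert n t)) (insert n t)}.Finite := by
    intro t ht hrej
    refine hrej.finite_accepts_insert.subset fun n ⟨hn, hlt, hnrej⟩ => ⟨⟨hn, hlt⟩, ?_⟩
    have hnt : ↑(insert n t) ⊆ range c := by
      simpa only [Finset.coe_insert] using insert_subset hn ht
    rw [← htail_insert]
    exact (hdecided _ hnt).resolve_right hnrej
  obtain ⟨D, hDc, hD, hDrej⟩ := exists_infinite_forall_finset
    (P := fun t => Rejects F (tail t) t) (infinite_range_of_injective hc.injective)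
    (by simpa only [tail, Finset.notMem_empty, IsEmpty.forall_iff, implies_true, sep_true]
      using hrej.mono hcB) hext
  refine ⟨D, hDc.trans hcB, hD, fun t htD hFt => ?_⟩
  refine hDrej t htD (tail t) subset_rfl (htail_inf t) fun Y ⟨_, htY, hYsub⟩ => ?_
  exact ⟨t, ⟨htY, fun x hx hxt => ((hYsub hx).resolve_left hxt).2⟩, hFt⟩

theorem galvin {B : Set ℕ} (hB : B.Infinite) :
    ∃ C ⊆ B, C.Infinite ∧ ((∀ Y ⊆ C, Y.Infinite → ∃ u, IsInitialSegment u Y ∧ F u) ∨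
      ∀ t : Finset ℕ, ↑t ⊆ C → ¬ F t) := by
  by_cases hrej : Rejects F B ∅
  · obtain ⟨C, hCB, hC, hF⟩ := hrej.exists_forall_not hB
    exact ⟨C, hCB, hC, Or.inr hF⟩
  simp only [Rejects, not_forall, not_not] at hrej
  obtain ⟨C, hCB, hC, hacc⟩ := hrej
  exact ⟨C, hCB, hC, Or.inl fun Y hY hYinf => hacc Y ⟨hYinf, by simp, by simpa using hY⟩⟩

end Galvin

namespace CompletelyRamsey

lemma empty : CompletelyRamsey ∅ :=
  fun _ B hB => ⟨B, subset_rfl, hB, Or.inr (disjoint_empty _)⟩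

lemma compl {A : Set (Set ℕ)} (h : CompletelyRamsey A) : CompletelyRamsey Aᶜ := by
  intro s B hB
  obtain ⟨C, hCB, hC, hCA⟩ := h s B hB
  exact ⟨C, hCB, hC,
    hCA.symm.imp subset_compl_iff_disjoint_right.2 disjoint_compl_right_iff_subset.2⟩

lemma congr {A A' : Set (Set ℕ)} (h : CompletelyRamsey A)
    (hAA' : ∀ X : Set ℕ, X.Infinite → (X ∈ A ↔ X ∈ A')) : CompletelyRamsey A' := by
  intro s B hB
  obtain ⟨C, hCB, hC, hCA⟩ := h s B hB
  refine ⟨C, hCB, hC, hCA.imp (fun h X hX => (hAA' X hX.1).1 (h hX)) fun h => ?_⟩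
  exact disjoint_left.2 fun X hX hXA' => disjoint_left.1 h hX ((hAA' X hX.1).2 hXA')

lemma of_forall_inter_Iic_eq {A : Set (Set ℕ)} (N : ℕ)
    (hA : ∀ X Y : Set ℕ, X.Infinite → Y.Infinite → X ∩ Iic N = Y ∩ Iic N → X ∈ A → Y ∈ A) :
    CompletelyRamsey A := by
  intro s B hB
  refine ⟨B \ Iic N, sdiff_subset, hB.sdiff (finite_Iic N), ?_⟩
  have hlow : ∀ X ∈ ellentuck s (B \ Iic N), X ∩ Iic N = ↑s ∩ Iic N := by
    rintro X ⟨-, hsX, hXs⟩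
    ext x
    simp only [mem_inter_iff]
    exact ⟨fun ⟨hx, hxN⟩ => ⟨((hXs hx).resolve_right fun h => h.2 hxN), hxN⟩,
      fun ⟨hx, hxN⟩ => ⟨hsX hx, hxN⟩⟩
  by_cases hX : ∃ X ∈ ellentuck s (B \ Iic N), X ∈ A
  · obtain ⟨X, hX, hXA⟩ := hX
    exact Or.inl fun Y hY => hA X Y hX.1 hY.1 ((hlow X hX).trans (hlow Y hY).symm) hXA
  · push Not at hX
    exact Or.inr (disjoint_left.2 hX)

end CompletelyRamsey

/- Once the boxes `[s ∪ t, Bs k]` decide the `A n`, the union `⋃ n, A n` is open on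
`[s, range c]` in the sense of Galvin's lemma. -/
lemma mem_iUnion_iff_of_fusion {A : ℕ → Set (Set ℕ)} {s : Finset ℕ} {c : ℕ → ℕ}
    {Bs : ℕ → Set ℕ} (hc : StrictMono c) (hBs : Antitone Bs) (hcBs : ∀ k, c k ∈ Bs k)
    (hcs : ∀ k, c k ∉ s)
    (hdec : ∀ k, ∀ t ⊆ (Finset.range k).image c, ∀ n < k,
      ellentuck (s ∪ t) (Bs k) ⊆ A n ∨ Disjoint (ellentuck (s ∪ t) (Bs k)) (A n))
    {X : Set ℕ} (hX : X ∈ ellentuck s (range c)) :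
    X ∈ ⋃ n, A n ↔ ∃ u, IsInitialSegment u (X \ ↑s) ∧
      ∃ n j, c j ∈ u ∧ ellentuck (s ∪ u) (Bs (j + 1)) ⊆ A n := by
  classical
  have hXc := sdiff_subset_of_mem_ellentuck hX
  have hbox : ∀ u j, IsInitialSegment u (X \ ↑s) → c j ∈ u →
      X ∈ ellentuck (s ∪ u) (Bs (j + 1)) := by
    rintro u j ⟨huX, hinit⟩ hju
    rw [ellentuck, mem_ofPred_eq, Finset.coe_union]
    refine ⟨hX.1, union_subset hX.2.1 (huX.trans sdiff_subset), sdiff_subset_iff.1 ?_⟩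
    rintro x ⟨hx, hxsu⟩
    rw [mem_union, not_or] at hxsu
    obtain ⟨i, rfl⟩ := hXc ⟨hx, hxsu.1⟩
    exact hBs (hc.lt_iff_lt.1 (hinit _ ⟨hx, hxsu.1⟩ hxsu.2 _ hju)) (hcBs i)
  refine ⟨fun hXA => ?_, fun ⟨u, hu, n, j, hju, hsub⟩ => mem_iUnion.2 ⟨n, hsub (hbox u j hu hju)⟩⟩
  obtain ⟨n, hXn⟩ := mem_iUnion.1 hXA
  obtain ⟨j, hjX, hnj⟩ := ((hX.1.sdiff s.finite_toSet).preimage hXc).exists_gt n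
  let u := ((Finset.range (j + 1)).image c).filter (· ∈ X)
  have hmem_u : ∀ {i}, i ≤ j → c i ∈ X → c i ∈ u := fun hij hcX =>
    Finset.mem_filter.2 ⟨Finset.mem_image_of_mem c (Finset.mem_range.2 (by omega)), hcX⟩
  have hu : IsInitialSegment u (X \ ↑s) := by
    refine ⟨fun x hx => ?_, fun x hx hxu y hy => ?_⟩
    · obtain ⟨hx, hxX⟩ := Finset.mem_filter.1 hx
      obtain ⟨i, -, rfl⟩ := Finset.mem_image.1 hx
      exact ⟨hxX, hcs i⟩
    · obtain ⟨i', rfl⟩ := hXc hx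
      obtain ⟨i, hi, rfl⟩ := Finset.mem_image.1 (Finset.mem_filter.1 hy).1
      have hji' : j < i' := not_le.1 fun h => hxu (hmem_u h hx.1)
      exact hc (by rw [Finset.mem_range] at hi; omega)
  have hcju : c j ∈ u := hmem_u le_rfl hjX.1
  refine ⟨u, hu, n, j, hcju, (hdec (j + 1) u (Finset.filter_subset _ _) n (by omega)).resolve_right
    fun h => disjoint_left.1 h (hbox u j hu hcju) hXn⟩

theorem CompletelyRamsey.iUnion {A : ℕ → Set (Set ℕ)} (h : ∀ n, CompletelyRamsey (A n)) :
    CompletelyRamsey (⋃ n, A n) := by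
  intro s B hB
  let Decides (B : Set ℕ) (q : Finset ℕ × ℕ) : Prop :=
    ellentuck (s ∪ q.1) B ⊆ A q.2 ∨ Disjoint (ellentuck (s ∪ q.1) B) (A q.2)
  obtain ⟨c, Bs, hc, hBs, hcB, hcBs, hdec⟩ := exists_fusion_sequence
    (Q := fun p B => ∀ q ∈ p.powerset ×ˢ Finset.range p.card, Decides B q)
    (fun p B hB => exists_subset_forall_mem_finset
      (fun hCB h => h.imp (ellentuck_mono hCB).trans fun h => h.mono_left (ellentuck_mono hCB))
      (fun B hB q => h q.2 (s ∪ q.1) B hB) _ hB) (hB.sdiff s.finite_toSet)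
  have hdec' : ∀ k, ∀ t ⊆ (Finset.range k).image c, ∀ n < k, Decides (Bs k) (t, n) :=
    fun k t ht n hn => hdec k (t, n) (by
      simpa [Finset.card_image_of_injective _ hc.injective] using ⟨ht, hn⟩)
  have hmem := fun {X} => mem_iUnion_iff_of_fusion (A := A) (X := X) hc hBs hcBs
    (fun k => (hcB ⟨k, rfl⟩).2) hdec'
  obtain ⟨C, hCc, hC, hF | hF⟩ := galvin (B := range c)
    (F := fun u => ∃ n j, c j ∈ u ∧ ellentuck (s ∪ u) (Bs (j + 1)) ⊆ A n)
    (infinite_range_of_injective hc.injective)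
  all_goals refine ⟨C, hCc.trans (hcB.trans sdiff_subset), hC, ?_⟩
  · exact Or.inl fun X hX => (hmem (ellentuck_mono hCc hX)).2
      (hF _ (sdiff_subset_of_mem_ellentuck hX) (hX.1.sdiff s.finite_toSet))
  · refine Or.inr (disjoint_left.2 fun X hX hXA => ?_)
    obtain ⟨u, hu, hFu⟩ := (hmem (ellentuck_mono hCc hX)).1 hXA
    exact hF u (hu.1.trans (sdiff_subset_of_mem_ellentuck hX)) hFu

lemma Nat.nth_eq_iff_of_infinite {p : ℕ → Prop} [DecidablePred p] (hp : (Set.ofPred p).Infinite)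
    {k m : ℕ} : Nat.nth p k = m ↔ p m ∧ Nat.count p m = k := by
  constructor
  · rintro rfl
    exact ⟨Nat.nth_mem_of_infinite hp k, Nat.count_nth_of_infinite hp k⟩
  · rintro ⟨hm, rfl⟩
    exact Nat.nth_count hm

lemma completelyRamsey_nth_eq (k m : ℕ) :
    CompletelyRamsey {X : Set ℕ | X.Infinite ∧ Nat.nth (· ∈ X) k = m} := by
  classical
  refine CompletelyRamsey.of_forall_inter_Iic_eq m fun X Y hX hY hXY ⟨_, hXk⟩ => ⟨hY, ?_⟩
  have hiff : ∀ x ≤ m, x ∈ X ↔ x ∈ Y := fun x hx => by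
    simpa [hx] using congrArg (x ∈ ·) hXY
  rw [Nat.nth_eq_iff_of_infinite (p := (· ∈ X)) hX] at hXk
  rw [Nat.nth_eq_iff_of_infinite (p := (· ∈ Y)) hY, ← (hiff m le_rfl), ← hXk.2,
    Nat.count_eq_card_filter_range, Nat.count_eq_card_filter_range]
  refine ⟨hXk.1, congrArg Finset.card (Finset.filter_congr fun x hx => (hiff x ?_).symm)⟩
  exact (Finset.mem_range.1 hx).le

namespace InfSub

def toSet (Y : InfSub) : Set ℕ := range Y.1

lemma toSet_infinite (Y : InfSub) : Y.toSet.Infinite :=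
  infinite_range_of_injective Y.2.injective

lemma toSet_injective : Function.Injective toSet :=
  fun Y Z h => Subtype.ext ((Y.2.range_inj Z.2).1 h)

lemma exists_toSet_eq {X : Set ℕ} (hX : X.Infinite) : ∃ Y : InfSub, Y.toSet = X :=
  ⟨⟨Nat.nth (· ∈ X), Nat.nth_strictMono hX⟩, Nat.range_nth_of_infinite hX⟩

lemma nth_toSet (Y : InfSub) : Nat.nth (· ∈ Y.toSet) = Y.1 :=
  ((Nat.nth_strictMono Y.toSet_infinite).range_inj Y.2).1
    (Nat.range_nth_of_infinite Y.toSet_infinite)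

lemma image_toSet_setOf_apply_eq (k m : ℕ) :
    toSet '' {Y | Y.1 k = m} = {X | X.Infinite ∧ Nat.nth (· ∈ X) k = m} := by
  ext X
  constructor
  · rintro ⟨Y, hY, rfl⟩
    exact ⟨Y.toSet_infinite, by rw [nth_toSet]; exact hY⟩
  · rintro ⟨hX, hXk⟩
    obtain ⟨Y, rfl⟩ := exists_toSet_eq hX
    exact ⟨Y, show Y.1 k = m by rwa [← nth_toSet], rfl⟩

lemma toSet_shiftS_subset (X : InfSub) : (shiftS X).toSet ⊆ X.toSet :=
  range_comp_subset_range (· + 1) X.1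

end InfSub

lemma shiftAdj_shiftS (X : InfSub) : shiftAdj X (shiftS X) := by
  refine ⟨fun h => (X.2 zero_lt_one).ne ?_, Or.inl rfl⟩
  exact congrArg (fun Y : InfSub => Y.1 0) h

/- The sets `A` with `CompletelyRamsey (toSet '' A)` form a σ-algebra in which every coordinate
`Y ↦ Y.1 k` is measurable. -/
open MeasureTheory in
theorem completelyRamsey_image_toSet {A : Set InfSub} (hA : MeasurableSet A) :
    CompletelyRamsey (InfSub.toSet '' A) := by
  let M : MeasurableSpace InfSub :=
    { MeasurableSet' := fun A => CompletelyRamsey (InfSub.toSet '' A)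
      measurableSet_empty := by simpa only [image_empty] using CompletelyRamsey.empty
      measurableSet_compl := fun A hA => hA.compl.congr fun X hX => by
        obtain ⟨Y, rfl⟩ := InfSub.exists_toSet_eq hX
        simp only [mem_compl_iff, InfSub.toSet_injective.mem_set_image]
      measurableSet_iUnion := fun A hA => by
        simpa only [image_iUnion] using CompletelyRamsey.iUnion hA }
  have hcoord : ∀ k, Measurable[M] fun Y : InfSub => Y.1 k := fun k =>
    measurable_to_countable' fun m => by
      show CompletelyRamsey (InfSub.toSet '' {Y | Y.1 k = m})
      rw [InfSub.image_toSet_setOf_apply_eq]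
      exact completelyRamsey_nth_eq k m
  exact (measurable_pi_iff.2 hcoord).comap_le _ hA

theorem exists_infinite_forall_toSet_subset_eq {ι : Type*} [Finite ι] [MeasurableSpace ι]
    [MeasurableSingletonClass ι] {c : InfSub → ι} (hc : Measurable c) :
    ∃ C : Set ℕ, C.Infinite ∧ ∃ i, ∀ Y : InfSub, Y.toSet ⊆ C → c Y = i := by
  have := Fintype.ofFinite ι
  let A (i : ι) : Set (Set ℕ) := InfSub.toSet '' (c ⁻¹' {i})
  obtain ⟨C, -, hC, hCA⟩ := exists_subset_forall_mem_finset
    (D := fun C i => ellentuck ∅ C ⊆ A i ∨ Disjoint (ellentuck ∅ C) (A i))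
    (fun hCB h => h.imp (ellentuck_mono hCB).trans fun h => h.mono_left (ellentuck_mono hCB))
    (fun B hB i => completelyRamsey_image_toSet (hc (measurableSet_singleton i)) ∅ B hB)
    Finset.univ infinite_univ
  have hmem : ∀ Y : InfSub, Y.toSet ⊆ C → Y.toSet ∈ ellentuck ∅ C := fun Y hY =>
    ⟨Y.toSet_infinite, by simp, by simpa using hY⟩
  obtain ⟨Y₀, rfl⟩ := InfSub.exists_toSet_eq hC
  refine ⟨Y₀.toSet, hC, c Y₀, fun Y hY => ?_⟩
  have hsub := (hCA (c Y₀) (Finset.mem_univ _)).resolve_right fun h =>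
    disjoint_left.1 h (hmem Y₀ subset_rfl) ⟨Y₀, rfl, rfl⟩
  obtain ⟨Z, hZ, hZY⟩ := hsub (hmem Y hY)
  exact InfSub.toSet_injective hZY ▸ hZ

/-- the Borel chromatic number of the shift graph is exactly ℵ₀:
there is a Borel coloring with countably many colors, but no Borel coloring
with finitely many colors. -/
theorem shiftGraph_borel_chromatic_aleph0 :
    (∃ c : InfSub → ℕ, Measurable c ∧ ∀ X Y : InfSub, shiftAdj X Y → c X ≠ c Y) ∧
    (∀ (n : ℕ) (c : InfSub → Fin n), Measurable c →
      ¬ (∀ X Y : InfSub, shiftAdj X Y → c X ≠ c Y)) := by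
  refine ⟨⟨fun X => X.1 0, (measurable_pi_apply 0).comp measurable_subtype_coe, ?_⟩, ?_⟩
  · rintro X Y ⟨-, rfl | rfl⟩
    · exact (X.2 zero_lt_one).ne
    · exact (Y.2 zero_lt_one).ne'
  · intro n c hc hcol
    obtain ⟨C, hC, i, hCi⟩ := exists_infinite_forall_toSet_subset_eq hc
    obtain ⟨X, rfl⟩ := InfSub.exists_toSet_eq hC
    exact hcol X (shiftS X) (shiftAdj_shiftS X)
      ((hCi X subset_rfl).trans (hCi _ X.toSet_shiftS_subset).symm)
end

section
/- If there is a continuous homomorphism φ from the directed shift graph D_S to (ω,P), where P is an irreflexive binary relation on ω, then there exists Y∈[ω]^ω such that the restriction of φ to [Y]^ω satisfies φ(X) < φ(S(X)) for all infinite X⊆Y. -/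
/-!
The set of `X` with `φ (S X) < φ X` is open, since `φ` and `φ ∘ S` are locally constant. By the
Galvin–Prikry theorem for open sets (the accept/reject argument with a fusion sequence), some
`[Y]^ω` lies inside this set or misses it. It cannot lie inside: the iterated shifts of `Y`
would make `φ` strictly decreasing along a sequence in `ℕ`. Hence `φ X ≤ φ (S X)` on `[Y]^ω`,
and irreflexivity of `P` makes this strict.
-/

namespace InfSub

lemma range_injective : Function.Injective fun X : InfSub => Set.range X.1 :=
  fun X Y h => Subtype.ext ((X.2.range_inj Y.2).1 h)

lemma range_shiftS_subset (X : InfSub) : Set.range (shiftS X).1 ⊆ Set.range X.1 :=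
  Set.range_comp_subset_range (· + 1) X.1

lemma continuous_shiftS : Continuous shiftS :=
  (continuous_pi fun n => (continuous_apply (n + 1)).comp continuous_subtype_val).subtype_mk
    (fun X : InfSub => (shiftS X).2)

noncomputable def ofInfinite (A : Set ℕ) (hA : A.Infinite) : InfSub :=
  ⟨Nat.nth (· ∈ A), Nat.nth_strictMono hA⟩

lemma range_ofInfinite {A : Set ℕ} (hA : A.Infinite) : Set.range (ofInfinite A hA).1 = A :=
  Nat.range_nth_of_infinite hA

lemma exists_forall_lt_imp_mem_of_isOpen {U : Set InfSub} (hU : IsOpen U) {X : InfSub}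
    (hX : X ∈ U) : ∃ n, ∀ X' : InfSub, (∀ i < n, X'.1 i = X.1 i) → X' ∈ U := by
  obtain ⟨V, hV, rfl⟩ := isOpen_induced_iff.1 hU
  obtain ⟨_, ⟨x, n, rfl⟩, hXn, hnV⟩ :=
    (PiNat.isTopologicalBasis_cylinders fun _ => ℕ).exists_subset_of_mem_open hX hV
  exact ⟨n, fun X' hX' => hnV (PiNat.mem_cylinder_iff.2 fun i hi =>
    (hX' i hi).trans (PiNat.mem_cylinder_iff.1 hXn i hi))⟩

lemma exists_eqOn_range_eq_image_union (X : InfSub) (n : ℕ) {A : Set ℕ} (hA : A.Infinite)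
    (hlt : ∀ i < n, ∀ k ∈ A, X.1 i < k) :
    ∃ X' : InfSub, (∀ i < n, X'.1 i = X.1 i) ∧ Set.range X'.1 = X.1 '' Set.Iio n ∪ A := by
  set Y := ofInfinite A hA
  have hYA : ∀ j, Y.1 j ∈ A := fun j => (range_ofInfinite hA).subset ⟨j, rfl⟩
  let g : ℕ → ℕ := fun i => if i < n then X.1 i else Y.1 (i - n)
  have hg : StrictMono g := by
    intro i j hij
    simp only [g]
    split_ifs with hi hj hj
    · exact X.2 hij
    · exact hlt i hi _ (hYA _)
    · omega
    · exact Y.2 (by omega)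
  refine ⟨⟨g, hg⟩, fun i hi => if_pos hi, Set.Subset.antisymm ?_ ?_⟩
  · rintro _ ⟨i, rfl⟩
    by_cases hi : i < n
    · exact Or.inl ⟨i, hi, (if_pos hi).symm⟩
    · exact Or.inr (by simpa [g, hi] using hYA (i - n))
  · rintro _ (⟨i, hi, rfl⟩ | hk)
    · exact ⟨i, if_pos hi⟩
    · rw [← range_ofInfinite hA] at hk
      obtain ⟨j, rfl⟩ := hk
      exact ⟨j + n, by simp [g, Y]⟩

end InfSub

lemma Set.Infinite.inter_Ioi {A : Set ℕ} (hA : A.Infinite) (n : ℕ) : (A ∩ Set.Ioi n).Infinite := by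
  simpa [Set.sdiff_eq, Set.compl_Iic] using hA.sdiff (Set.finite_Iic n)

namespace GalvinPrikry

variable {𝒰 : Set (Set ℕ)} {Y Z : Set ℕ} {s : Finset ℕ}

def Accepts (𝒰 : Set (Set ℕ)) (Y : Set ℕ) (s : Finset ℕ) : Prop :=
  ∀ A ⊆ Y, A.Infinite → (∀ m ∈ s, ∀ k ∈ A, m < k) → ↑s ∪ A ∈ 𝒰

def Rejects (𝒰 : Set (Set ℕ)) (Y : Set ℕ) (s : Finset ℕ) : Prop :=
  ∀ Z ⊆ Y, Z.Infinite → ¬ Accepts 𝒰 Z s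

lemma Accepts.mono (h : Accepts 𝒰 Y s) (hZY : Z ⊆ Y) : Accepts 𝒰 Z s :=
  fun A hAZ => h A (hAZ.trans hZY)

lemma Rejects.mono (h : Rejects 𝒰 Y s) (hZY : Z ⊆ Y) : Rejects 𝒰 Z s :=
  fun W hWZ => h W (hWZ.trans hZY)

lemma Rejects.of_inter_Ioi {n : ℕ} (h : Rejects 𝒰 (Y ∩ Set.Ioi n) s) : Rejects 𝒰 Y s :=
  fun W hWY hW hacc => h (W ∩ Set.Ioi n) (Set.inter_subset_inter_left _ hWY) (hW.inter_Ioi n)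
    (hacc.mono Set.inter_subset_left)

lemma accepts_of_forall_accepts_insert (h : ∀ n ∈ Y, Accepts 𝒰 (Y ∩ Set.Ioi n) (insert n s)) :
    Accepts 𝒰 Y s := by
  intro A hAY hA hsA
  have ha : sInf A ∈ A := Nat.sInf_mem hA.nonempty
  have hmin : ∀ k ∈ A \ {sInf A}, sInf A < k := fun k hk =>
    (Nat.sInf_le hk.1).lt_of_ne (Ne.symm hk.2)
  have key := h _ (hAY ha) (A \ {sInf A}) (fun k hk => ⟨hAY hk.1, hmin k hk⟩)
    (hA.sdiff (Set.finite_singleton _)) (fun m hm k hk => by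
      rcases Finset.mem_insert.1 hm with rfl | hm
      exacts [hmin k hk, hsA m hm k hk.1])
  rwa [Finset.coe_insert, Set.insert_union, ← Set.union_insert, Set.insert_sdiff_singleton,
    Set.insert_eq_of_mem ha] at key


lemma exists_fusion (Good : Finset ℕ → Set ℕ → Prop) (hGood : ∀ F, Antitone (Good F))
    (hY : Y.Infinite) (h₀ : Good ∅ Y)
    (step : ∀ F Z, Z ⊆ Y → Z.Infinite → Good F Z →
      ∃ n ∈ Z, ∃ Z' ⊆ Z ∩ Set.Ioi n, Z'.Infinite ∧ Good (insert n F) Z') :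
    ∃ X : InfSub, Set.range X.1 ⊆ Y ∧
      ∀ i, Good ((Finset.range (i + 1)).image X.1) (Set.range X.1 ∩ Set.Ioi (X.1 i)) := by
  let State := {p : Finset ℕ × Set ℕ // p.2 ⊆ Y ∧ p.2.Infinite ∧ Good p.1 p.2}
  have hstep : ∀ p : State, ∃ n ∈ p.1.2, ∃ q : State,
      q.1.1 = insert n p.1.1 ∧ q.1.2 ⊆ p.1.2 ∩ Set.Ioi n := by
    rintro ⟨⟨F, Z⟩, hZY, hZ, hFZ⟩
    obtain ⟨n, hn, Z', hZ'Z, hZ', hgood⟩ := step F Z hZY hZ hFZ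
    exact ⟨n, hn, ⟨(insert n F, Z'), (hZ'Z.trans Set.inter_subset_left).trans hZY, hZ', hgood⟩,
      rfl, hZ'Z⟩
  choose next hnext succ hsuccF hsuccZ using hstep
  let st : ℕ → State := fun i => Nat.rec ⟨(∅, Y), subset_rfl, hY, h₀⟩ (fun _ p => succ p) i
  let x : ℕ → ℕ := fun i => next (st i)
  have hZanti : Antitone fun i => (st i).1.2 :=
    antitone_nat_of_succ_le fun i => (hsuccZ (st i)).trans Set.inter_subset_left
  have hx : StrictMono x := strictMono_nat_of_lt_succ fun i => (hsuccZ (st i) (hnext _)).2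
  have hF : ∀ i, (st i).1.1 = (Finset.range i).image x := by
    intro i
    induction i with
    | zero => rfl
    | succ i ih => rw [Finset.range_add_one, Finset.image_insert, ← ih]; exact hsuccF (st i)
  refine ⟨⟨x, hx⟩, Set.range_subset_iff.2 fun i => (st i).2.1 (hnext _), fun i => ?_⟩
  have htail : Set.range x ∩ Set.Ioi (x i) ⊆ (st (i + 1)).1.2 := by
    rintro _ ⟨⟨j, rfl⟩, hj⟩
    exact hZanti (Nat.succ_le_of_lt (hx.lt_iff_lt.1 hj)) (hnext _)
  exact hF (i + 1) ▸ hGood _ htail (st (i + 1)).2.2.2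


lemma Rejects.exists_forall_rejects_insert (hY : Y.Infinite) (hrej : Rejects 𝒰 Y s) :
    ∃ Z ⊆ Y, Z.Infinite ∧ ∀ n ∈ Z, Rejects 𝒰 Z (insert n s) := by
  by_contra! hcon
  have step : ∀ (F : Finset ℕ) Z, Z ⊆ Y → Z.Infinite → (∀ n ∈ F, Accepts 𝒰 Z (insert n s)) →
      ∃ n ∈ Z, ∃ Z' ⊆ Z ∩ Set.Ioi n, Z'.Infinite ∧
        ∀ m ∈ insert n F, Accepts 𝒰 Z' (insert m s) := by
    intro F Z hZY hZ hFZ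
    obtain ⟨n, hn, W, hWZ, hW, hWacc⟩ : ∃ n ∈ Z, ∃ W ⊆ Z, W.Infinite ∧ Accepts 𝒰 W (insert n s) := by
      simpa [Rejects] using hcon Z hZY hZ
    refine ⟨n, hn, W ∩ Set.Ioi n, Set.inter_subset_inter_left _ hWZ, hW.inter_Ioi n, ?_⟩
    intro m hm
    rcases Finset.mem_insert.1 hm with rfl | hm
    exacts [hWacc.mono Set.inter_subset_left, (hFZ m hm).mono (Set.inter_subset_left.trans hWZ)]
  obtain ⟨X, hXY, hX⟩ := exists_fusion (fun F Z => ∀ n ∈ F, Accepts 𝒰 Z (insert n s))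
    (fun F _ _ hZY hacc n hn => (hacc n hn).mono hZY) hY (by simp) step
  refine hrej _ hXY (Set.infinite_range_of_injective X.2.injective)
    (accepts_of_forall_accepts_insert ?_)
  rintro _ ⟨i, rfl⟩
  exact hX i _ (Finset.mem_image_of_mem _ (Finset.self_mem_range_succ i))

lemma Rejects.exists_forall_rejects_insert_of_finset (hY : Y.Infinite) (S : Finset (Finset ℕ))
    (hrej : ∀ s ∈ S, Rejects 𝒰 Y s) :
    ∃ Z ⊆ Y, Z.Infinite ∧ ∀ s ∈ S, ∀ n ∈ Z, Rejects 𝒰 Z (insert n s) := by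
  classical
  induction S using Finset.induction_on generalizing Y with
  | empty => exact ⟨Y, subset_rfl, hY, by simp⟩
  | insert s S _ ih =>
    obtain ⟨Z, hZY, hZ, hZrej⟩ := ih hY fun t ht => hrej t (Finset.mem_insert_of_mem ht)
    obtain ⟨Z', hZ'Z, hZ', hZ'rej⟩ :=
      ((hrej s (Finset.mem_insert_self _ _)).mono hZY).exists_forall_rejects_insert hZ
    refine ⟨Z', hZ'Z.trans hZY, hZ', fun t ht n hn => ?_⟩
    rcases Finset.mem_insert.1 ht with rfl | ht
    exacts [hZ'rej n hn, (hZrej t ht n (hZ'Z hn)).mono hZ'Z]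

lemma Rejects.exists_forall_rejects (hY : Y.Infinite) (hrej : Rejects 𝒰 Y ∅) :
    ∃ Z ⊆ Y, Z.Infinite ∧ ∀ s : Finset ℕ, ↑s ⊆ Z → Rejects 𝒰 Z s := by
  classical
  have step : ∀ (F : Finset ℕ) Z, Z ⊆ Y → Z.Infinite → (∀ t ⊆ F, Rejects 𝒰 Z t) →
      ∃ n ∈ Z, ∃ Z' ⊆ Z ∩ Set.Ioi n, Z'.Infinite ∧ ∀ t ⊆ insert n F, Rejects 𝒰 Z' t := by
    intro F Z _ hZ hFZ
    obtain ⟨Z', hZ'Z, hZ', hZ'rej⟩ := Rejects.exists_forall_rejects_insert_of_finset hZ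
      F.powerset fun t ht => hFZ t (Finset.mem_powerset.1 ht)
    obtain ⟨n, hn⟩ := hZ'.nonempty
    refine ⟨n, hZ'Z hn, Z' ∩ Set.Ioi n, Set.inter_subset_inter_left _ hZ'Z, hZ'.inter_Ioi n,
      fun t ht => ?_⟩
    have herase : t.erase n ⊆ F := Finset.subset_insert_iff.1 ht
    by_cases hnt : n ∈ t
    · rw [← Finset.insert_erase hnt]
      exact (hZ'rej _ (Finset.mem_powerset.2 herase) n hn).mono Set.inter_subset_left
    · rw [← Finset.erase_eq_of_notMem hnt]
      exact (hFZ _ herase).mono (Set.inter_subset_left.trans hZ'Z)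
  obtain ⟨X, hXY, hX⟩ := exists_fusion (fun F Z => ∀ t ⊆ F, Rejects 𝒰 Z t)
    (fun F _ _ hZY hrej t ht => (hrej t ht).mono hZY) hY
    (fun t ht => Finset.subset_empty.1 ht ▸ hrej) step
  refine ⟨_, hXY, Set.infinite_range_of_injective X.2.injective, fun s hs => ?_⟩
  have hbound : ∀ m ∈ s, m ≤ X.1 (s.sup id) := fun m hm =>
    (Finset.le_sup (f := id) hm).trans (X.2.id_le _)
  refine (hX (s.sup id) s fun m hm => ?_).of_inter_Ioi
  obtain ⟨j, rfl⟩ := hs hm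
  exact Finset.mem_image_of_mem _ (Finset.mem_range_succ_iff.2 (X.2.le_iff_le.1 (hbound _ hm)))

lemma exists_accepts_empty_or_forall_rejects (𝒰 : Set (Set ℕ)) :
    ∃ Z : Set ℕ, Z.Infinite ∧ (Accepts 𝒰 Z ∅ ∨ ∀ s : Finset ℕ, ↑s ⊆ Z → Rejects 𝒰 Z s) := by
  by_cases hrej : Rejects 𝒰 Set.univ ∅
  · obtain ⟨Z, -, hZ, hZrej⟩ := hrej.exists_forall_rejects Set.infinite_univ
    exact ⟨Z, hZ, Or.inr hZrej⟩
  · obtain ⟨Z, -, hZ, hacc⟩ : ∃ Z ⊆ Set.univ, Z.Infinite ∧ Accepts 𝒰 Z ∅ := by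
      simpa [Rejects] using hrej
    exact ⟨Z, hZ, Or.inl hacc⟩

end GalvinPrikry

namespace InfSub

open GalvinPrikry

lemma exists_accepts_of_mem_isOpen {U : Set InfSub} (hU : IsOpen U) {X : InfSub} (hX : X ∈ U)
    {Z : Set ℕ} (hXZ : Set.range X.1 ⊆ Z) :
    ∃ s : Finset ℕ, ↑s ⊆ Z ∧ Accepts ((fun X : InfSub => Set.range X.1) '' U) Z s := by
  obtain ⟨n, hn⟩ := exists_forall_lt_imp_mem_of_isOpen hU hX
  refine ⟨(Finset.range n).image X.1, ?_, fun A _ hA hsA => ?_⟩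
  · simpa using (Set.image_subset_range _ _).trans hXZ
  · obtain ⟨X', hX'X, hX'⟩ := exists_eqOn_range_eq_image_union X n hA fun i hi =>
      hsA _ (Finset.mem_image_of_mem _ (Finset.mem_range.2 hi))
    exact ⟨X', hn X' hX'X, by simpa using hX'⟩

/-- The Galvin–Prikry theorem for open sets. -/
theorem exists_homogeneous_of_isOpen {U : Set InfSub} (hU : IsOpen U) :
    ∃ Y : InfSub, (∀ X : InfSub, Set.range X.1 ⊆ Set.range Y.1 → X ∈ U) ∨
      ∀ X : InfSub, Set.range X.1 ⊆ Set.range Y.1 → X ∉ U := by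
  obtain ⟨Z, hZ, hacc | hrej⟩ :=
    exists_accepts_empty_or_forall_rejects ((fun X : InfSub => Set.range X.1) '' U)
  · refine ⟨ofInfinite Z hZ, Or.inl fun X hX => ?_⟩
    rw [range_ofInfinite] at hX
    obtain ⟨X', hX'U, hX'X⟩ := hacc _ hX (Set.infinite_range_of_injective X.2.injective) (by simp)
    rwa [← @range_injective X' X (by simpa using hX'X)]
  · refine ⟨ofInfinite Z hZ, Or.inr fun X hX hXU => ?_⟩
    rw [range_ofInfinite] at hX
    obtain ⟨s, hsZ, hacc⟩ := exists_accepts_of_mem_isOpen hU hXU hX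
    exact hrej s hsZ Z subset_rfl hZ hacc

lemma exists_le_comp_shiftS (f : InfSub → ℕ) (Y : InfSub) :
    ∃ X : InfSub, Set.range X.1 ⊆ Set.range Y.1 ∧ f X ≤ f (shiftS X) := by
  by_contra! h
  have hsub : ∀ n, Set.range (shiftS^[n] Y).1 ⊆ Set.range Y.1 := by
    intro n
    induction n with
    | zero => exact subset_rfl
    | succ n ih =>
      rw [Function.iterate_succ_apply']
      exact (range_shiftS_subset _).trans ih
  refine not_strictAnti_of_wellFoundedLT (fun n => f (shiftS^[n] Y))
    (strictAnti_nat_of_succ_lt fun n => ?_)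
  simpa only [Function.iterate_succ_apply'] using h _ (hsub n)

end InfSub

/-- if `φ` is a continuous homomorphism from `D_S` to `(ω, P)`
with `P` irreflexive, then there is `Y ∈ [ω]^ω` such that `φ(X) < φ(S(X))`
for all infinite `X ⊆ Y`. -/
theorem continuous_hom_strict_increase (P : ℕ → ℕ → Prop) (hP : Irreflexive P)
    (φ : InfSub → ℕ) (hφc : Continuous φ) (hφ : ∀ X : InfSub, P (φ X) (φ (shiftS X))) :
    ∃ Y : InfSub, ∀ X : InfSub, Set.range X.1 ⊆ Set.range Y.1 → φ X < φ (shiftS X) := by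
  obtain ⟨Y, hdrop | hnodrop⟩ :=
    InfSub.exists_homogeneous_of_isOpen (isOpen_lt (hφc.comp InfSub.continuous_shiftS) hφc)
  · obtain ⟨X, hXY, hle⟩ := InfSub.exists_le_comp_shiftS φ Y
    exact absurd (hdrop X hXY) hle.not_gt
  · refine ⟨Y, fun X hXY => (not_lt.1 (hnodrop X hXY)).lt_of_ne fun h => hP (φ X) ?_⟩
    simpa [h] using hφ X
end

section
/- The usual order ≤ on ω is a better-binary-relation: for every continuous map φ:[ω]^ω→ω (ω discrete), there exists X∈[ω]^ω with φ(X) ≤ φ(S(X)). -/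
theorem exists_le_apply_self_map_of_wellFoundedLT {α β : Type*} [Nonempty α] [LinearOrder β]
    [WellFoundedLT β] (φ : α → β) (s : α → α) : ∃ x, φ x ≤ φ (s x) := by
  obtain ⟨n, hn⟩ := WellFounded.not_rel_apply_succ (r := (· < ·))
    fun n => φ (s^[n] (Classical.arbitrary α))
  refine ⟨s^[n] (Classical.arbitrary α), not_lt.mp ?_⟩
  rwa [Function.iterate_succ_apply'] at hn

theorem nat_le_better_general (φ : InfSub → ℕ) :
    ∃ X : InfSub, φ X ≤ φ (shiftS X) :=
  haveI : Nonempty InfSub := ⟨⟨id, strictMono_id⟩⟩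
  exists_le_apply_self_map_of_wellFoundedLT φ shiftS

/-- the usual order on ω is a better-binary-relation: every
continuous `φ : [ω]^ω → ω` (ω discrete) admits `X` with `φ(X) ≤ φ(S(X))`. -/
theorem nat_le_better (φ : InfSub → ℕ) (hφ : Continuous φ) :
    ∃ X : InfSub, φ X ≤ φ (shiftS X) :=
  nat_le_better_general φ
end
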